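/- arXiv:2605.15409 — 4 statements merged into one kernel-verified Lean document; each statement's English description precedes it below -/
import Mathlib

section
/- Let R, m, A, W, H, g, Φ, σ be real constants with R, m, A, W, H, Φ > 0, and let T_int, T_ext be real constants. Let T₁, T₂, ρ₁, ρ₂ : [0,H] → ℝ be differentiable with ρ₁, ρ₂ > 0, set u₁ := Φ/ρ₁, u₂ := −Φ/ρ₂, and q := σ(T₁ − T₂). Suppose that for i = 1, 2 and all z ∈ [0,H], d/dz[(7/2)(R/m)T_i(z) + (1/2)Φ²/ρ_i(z)²] = −(q(z)/Φ)(W/A) − g, and the inflow Bernoulli boundary conditions hold: (1/2)u₁(0)² + (7/2)(R/m)T₁(0) = (7/2)(R/m)T_int and (1/2)u₂(H)² + (7/2)(R/m)T₂(H) = (7/2)(R/m)T_ext. Then, with Q := (W/A)∫₀ᴴ q(z) dz, the power P := AΦ[(7/2)(R/m)(T₁(H) − T₂(H)) + (1/2)(u₁(H)² − u₂(H)²)] satisfies P = AΦ[(7/2)(R/m)(T_int − T_ext) − gH − Q/Φ]. -/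
open Set

/-- The power formula `P = AΦ[(7/2)(R/m)(T_int − T_ext) − gH − Q/Φ]` for the
buoyancy-driven heat exchanger. -/
theorem heat_exchanger_power_formula
    (R m A W H g Φ σ T_int T_ext : ℝ)
    (hR : 0 < R) (hm : 0 < m) (hA : 0 < A) (hW : 0 < W) (hH : 0 < H) (hΦ : 0 < Φ)
    (T₁ T₂ ρ₁ ρ₂ : ℝ → ℝ)
    (hT₁ : DifferentiableOn ℝ T₁ (Icc 0 H)) (hT₂ : DifferentiableOn ℝ T₂ (Icc 0 H))
    (hρ₁ : DifferentiableOn ℝ ρ₁ (Icc 0 H)) (hρ₂ : DifferentiableOn ℝ ρ₂ (Icc 0 H))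
    (hρ₁pos : ∀ z ∈ Icc (0:ℝ) H, 0 < ρ₁ z) (hρ₂pos : ∀ z ∈ Icc (0:ℝ) H, 0 < ρ₂ z)
    (u₁ u₂ q : ℝ → ℝ)
    (hu₁ : u₁ = fun z => Φ / ρ₁ z)
    (hu₂ : u₂ = fun z => -Φ / ρ₂ z)
    (hq : q = fun z => σ * (T₁ z - T₂ z))
    (henergy₁ : ∀ z ∈ Icc (0:ℝ) H,
      HasDerivWithinAt (fun z => (7/2) * (R/m) * T₁ z + (1/2) * Φ^2 / (ρ₁ z)^2)
        (-(q z / Φ) * (W/A) - g) (Icc 0 H) z)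
    (henergy₂ : ∀ z ∈ Icc (0:ℝ) H,
      HasDerivWithinAt (fun z => (7/2) * (R/m) * T₂ z + (1/2) * Φ^2 / (ρ₂ z)^2)
        (-(q z / Φ) * (W/A) - g) (Icc 0 H) z)
    (hbc₁ : (1/2) * (u₁ 0)^2 + (7/2) * (R/m) * T₁ 0 = (7/2) * (R/m) * T_int)
    (hbc₂ : (1/2) * (u₂ H)^2 + (7/2) * (R/m) * T₂ H = (7/2) * (R/m) * T_ext)
    (Q : ℝ) (hQ : Q = (W/A) * ∫ z in (0:ℝ)..H, q z)
    (P : ℝ)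
    (hP : P = A * Φ * ((7/2) * (R/m) * (T₁ H - T₂ H)
      + (1/2) * ((u₁ H)^2 - (u₂ H)^2))) :
    P = A * Φ * ((7/2) * (R/m) * (T_int - T_ext) - g * H - Q / Φ) := by
  set E₁ : ℝ → ℝ := fun z => (7/2) * (R/m) * T₁ z + (1/2) * Φ^2 / (ρ₁ z)^2 with hE₁
  set f : ℝ → ℝ := fun z => -(q z / Φ) * (W/A) - g with hf
  have hqc : ContinuousOn q (Icc 0 H) := by
    rw [hq]; exact (continuousOn_const.mul (hT₁.continuousOn.sub hT₂.continuousOn))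
  have hfc : ContinuousOn f (Icc 0 H) := by
    apply ContinuousOn.sub _ continuousOn_const
    exact ((hqc.div_const Φ).neg.mul continuousOn_const)
  have hint : IntervalIntegrable f MeasureTheory.volume 0 H := by
    apply ContinuousOn.intervalIntegrable
    rwa [uIcc_of_le hH.le]
  have hE₁c : ContinuousOn E₁ (Icc 0 H) := fun z hz => ((henergy₁ z hz).continuousWithinAt)
  have hftc : ∫ z in (0:ℝ)..H, f z = E₁ H - E₁ 0 := by
    apply intervalIntegral.integral_eq_sub_of_hasDeriv_right_of_le hH.le hE₁c _ hint
    intro x hx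
    have hx' : x ∈ Icc (0:ℝ) H := Ioo_subset_Icc_self hx
    have := (henergy₁ x hx').hasDerivAt (Icc_mem_nhds hx.1 hx.2)
    exact this.hasDerivWithinAt
  have hintq : IntervalIntegrable q MeasureTheory.volume 0 H := by
    apply ContinuousOn.intervalIntegrable
    rwa [uIcc_of_le hH.le]
  have hfval : ∫ z in (0:ℝ)..H, f z
      = -(W/A) / Φ * (∫ z in (0:ℝ)..H, q z) - g * H := by
    have hfun : ∀ z, f z = (-(W/A)/Φ) * q z + (-g) := by
      intro z; rw [hf]; ring
    rw [intervalIntegral.integral_congr (fun z _ => hfun z)]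
    rw [intervalIntegral.integral_add ((hintq.const_mul _)) intervalIntegrable_const,
      intervalIntegral.integral_const_mul, intervalIntegral.integral_const]
    simp; ring
  -- kinetic terms
  have hρ₁H := (hρ₁pos H (by constructor <;> [exact hH.le; rfl] : H ∈ Icc (0:ℝ) H)).ne'
  have hρ₂H := (hρ₂pos H ⟨hH.le, le_rfl⟩).ne'
  have hu₁H : (u₁ H)^2 = Φ^2 / (ρ₁ H)^2 := by rw [hu₁]; field_simp
  have hu₂H : (u₂ H)^2 = Φ^2 / (ρ₂ H)^2 := by rw [hu₂]; field_simp
  have hu₁0 : (u₁ 0)^2 = Φ^2 / (ρ₁ 0)^2 := by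
    have := (hρ₁pos 0 ⟨le_rfl, hH.le⟩).ne'
    rw [hu₁]; field_simp
  -- E₁ 0 = (7/2)(R/m) T_int
  have hE₁0 : E₁ 0 = (7/2) * (R/m) * T_int := by
    rw [hE₁]; rw [← hbc₁, hu₁0]; ring
  -- second FTC for E₂
  set E₂ : ℝ → ℝ := fun z => (7/2) * (R/m) * T₂ z + (1/2) * Φ^2 / (ρ₂ z)^2 with hE₂def
  have hE₂H : E₂ H = (7/2) * (R/m) * T_ext := by
    rw [hE₂def]; rw [← hbc₂, hu₂H]; ring
  -- E₁ H from FTC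
  have hE₁H : E₁ H = (7/2) * (R/m) * T_int + (-(W/A)/Φ * (∫ z in (0:ℝ)..H, q z) - g * H) := by
    have := hftc
    rw [hfval] at this
    linarith [hE₁0]
  -- combine
  have hEH : E₁ H = (7/2) * (R/m) * T₁ H + (1/2) * (u₁ H)^2 := by
    rw [hE₁, hu₁H]; ring
  have hE₂H' : E₂ H = (7/2) * (R/m) * T₂ H + (1/2) * (u₂ H)^2 := by
    rw [hE₂def, hu₂H]; ring
  have hQ' : Q / Φ = (W/A)/Φ * (∫ z in (0:ℝ)..H, q z) := by rw [hQ]; ring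
  rw [hP]
  have : (7/2) * (R/m) * (T₁ H - T₂ H) + (1/2) * ((u₁ H)^2 - (u₂ H)^2)
      = E₁ H - E₂ H := by rw [hEH, hE₂H']; ring
  rw [this, hE₁H, hE₂H, hQ']
  ring
end

section
/- Let R, m, A, W, g, Φ be real constants with R, m, A, Φ > 0, and let ρ, T, q : [0,H] → ℝ with ρ, T differentiable, ρ > 0, and q continuous. Define p := ρ·(R/m)·T (ideal gas law), u := Φ/ρ, and e := (5/2)·(R/m)·T. If for all z ∈ [0,H], d/dz[p(z)u(z) + (e(z)ρ(z) + (1/2)ρ(z)u(z)²)u(z)] = q(z)(W/A) − ρ(z)g u(z), then for all z ∈ [0,H], d/dz[(7/2)(R/m)T(z) + (1/2)Φ²/ρ(z)²] = (q(z)/Φ)(W/A) − g. -/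
open Set

/-- Reduction of the steady-state energy conservation equation in a single tube of the
heat exchanger, using the constancy of the mass flux per unit area `Φ = ρu`. -/
theorem energy_conservation_reduction
    (R m A W g Φ H : ℝ)
    (hR : 0 < R) (hm : 0 < m) (hA : 0 < A) (hΦ : 0 < Φ)
    (ρ T q : ℝ → ℝ)
    (hρdiff : DifferentiableOn ℝ ρ (Icc 0 H)) (hTdiff : DifferentiableOn ℝ T (Icc 0 H))
    (hρpos : ∀ z ∈ Icc (0:ℝ) H, 0 < ρ z)
    (hqcont : ContinuousOn q (Icc 0 H))
    (p u e : ℝ → ℝ)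
    (hp : p = fun z => ρ z * (R/m) * T z)
    (hu : u = fun z => Φ / ρ z)
    (he : e = fun z => (5/2) * (R/m) * T z)
    (henergy : ∀ z ∈ Icc (0:ℝ) H,
      HasDerivWithinAt
        (fun z => p z * u z + (e z * ρ z + (1/2) * ρ z * (u z)^2) * u z)
        (q z * (W/A) - ρ z * g * u z) (Icc 0 H) z) :
    ∀ z ∈ Icc (0:ℝ) H,
      HasDerivWithinAt
        (fun z => (7/2) * (R/m) * T z + (1/2) * Φ^2 / (ρ z)^2)
        ((q z / Φ) * (W/A) - g) (Icc 0 H) z := by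
  intro z hz
  have hρz := (hρpos z hz).ne'
  have key := (henergy z hz).const_mul (1/Φ)
  have hfun : ∀ y ∈ Icc (0:ℝ) H,
      (7/2) * (R/m) * T y + (1/2) * Φ^2 / (ρ y)^2
        = (1/Φ) * (p y * u y + (e y * ρ y + (1/2) * ρ y * (u y)^2) * u y) := by
    intro y hy
    have hy' := (hρpos y hy).ne'
    subst hp hu he
    field_simp
    ring
  have h2 := key.congr hfun (hfun z hz)
  refine h2.congr_deriv ?_
  subst hu
  field_simp
end

section
/- Let σ⁰ > 0, Φ⁰ > 0, and T_int > 1 be real constants, and set T_D := (T_int − 1)/(1 + (2/7)(σ⁰/Φ⁰)). Suppose T₁, T₂ : [0,1] → ℝ are differentiable and satisfy, for i = 1, 2 and all z ∈ [0,1], (7/2)·T_i'(z) = −(σ⁰/Φ⁰)·(T₁(z) − T₂(z)), with boundary conditions T₁(0) = T_int and T₂(1) = 1. Then T₁(z) − T₂(z) = T_D for all z ∈ [0,1], and moreover T₁(z) = T_int − (2/7)(σ⁰/Φ⁰)T_D·z and T₂(z) = 1 − (2/7)(σ⁰/Φ⁰)T_D·(z − 1) for all z ∈ [0,1]. -/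
open Set

/-- The zeroth-order asymptotic temperature profiles in the two tubes of the heat
exchanger: the temperature difference is the constant `T_D`, and the temperatures are
linear in `z`. -/
theorem leading_order_temperature_profiles
    (σ₀ Φ₀ T_int : ℝ) (hσ : 0 < σ₀) (hΦ : 0 < Φ₀) (hT : 1 < T_int)
    (T_D : ℝ) (hTD : T_D = (T_int - 1) / (1 + (2/7) * (σ₀ / Φ₀)))
    (T₁ T₂ : ℝ → ℝ)
    (hT₁diff : DifferentiableOn ℝ T₁ (Icc 0 1)) (hT₂diff : DifferentiableOn ℝ T₂ (Icc 0 1))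
    (hode₁ : ∀ z ∈ Icc (0:ℝ) 1,
      HasDerivWithinAt (fun z => (7/2) * T₁ z) (-(σ₀ / Φ₀) * (T₁ z - T₂ z)) (Icc 0 1) z)
    (hode₂ : ∀ z ∈ Icc (0:ℝ) 1,
      HasDerivWithinAt (fun z => (7/2) * T₂ z) (-(σ₀ / Φ₀) * (T₁ z - T₂ z)) (Icc 0 1) z)
    (hbc₁ : T₁ 0 = T_int) (hbc₂ : T₂ 1 = 1) :
    ∀ z ∈ Icc (0:ℝ) 1,
      T₁ z - T₂ z = T_D ∧
      T₁ z = T_int - (2/7) * (σ₀ / Φ₀) * T_D * z ∧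
      T₂ z = 1 - (2/7) * (σ₀ / Φ₀) * T_D * (z - 1) := by
  set k := σ₀ / Φ₀ with hk
  have hk0 : 0 < k := div_pos hσ hΦ
  have hmem : ∀ x ∈ Ico (0:ℝ) 1, Icc (0:ℝ) 1 ∈ nhdsWithin x (Ici x) := by
    intro x hx
    refine mem_nhdsWithin.2 ⟨Iio 1, isOpen_Iio, hx.2, fun y hy => ?_⟩
    exact ⟨le_trans hx.1 hy.2, le_of_lt hy.1⟩
  set D := T₁ 0 - T₂ 0 with hD
  have h0mem : (0:ℝ) ∈ Icc (0:ℝ) 1 := ⟨le_refl 0, by norm_num⟩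
  have h1mem : (1:ℝ) ∈ Icc (0:ℝ) 1 := ⟨by norm_num, le_refl 1⟩
  -- Step 1: constant difference
  have hFcont : ContinuousOn (fun z => (7/2) * T₁ z - (7/2) * T₂ z) (Icc 0 1) :=
    ((hT₁diff.continuousOn.const_smul (7/2:ℝ)).sub (hT₂diff.continuousOn.const_smul (7/2:ℝ)))
  have hstep1 : ∀ z ∈ Icc (0:ℝ) 1, T₁ z - T₂ z = D := by
    have hconst := constant_of_has_deriv_right_zero hFcont (fun x hx => by
      have h1 := (hode₁ x (Ico_subset_Icc_self hx)).mono_of_mem_nhdsWithin (hmem x hx)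
      have h2 := (hode₂ x (Ico_subset_Icc_self hx)).mono_of_mem_nhdsWithin (hmem x hx)
      have h3 := h1.sub h2
      rw [sub_self] at h3
      exact h3)
    intro z hz
    have := hconst z hz
    linarith
  -- Step 2: T₁ is linear
  have hstep2 : ∀ z ∈ Icc (0:ℝ) 1, T₁ z = T_int - (2/7) * k * D * z := by
    have hGcont : ContinuousOn (fun z => (7/2) * T₁ z + k * D * z) (Icc 0 1) :=
      (hT₁diff.continuousOn.const_smul (7/2:ℝ)).add (continuousOn_id.const_smul (k*D))
    have hconst := constant_of_has_deriv_right_zero hGcont (fun x hx => by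
      have h1 := (hode₁ x (Ico_subset_Icc_self hx)).mono_of_mem_nhdsWithin (hmem x hx)
      have h2 : HasDerivWithinAt (fun z : ℝ => k * D * z) (k * D) (Ici x) x := by
        simpa using (hasDerivWithinAt_id x (Ici x)).const_mul (k * D)
      have hd : T₁ x - T₂ x = D := hstep1 x (Ico_subset_Icc_self hx)
      have h3 : HasDerivWithinAt (fun z => 7/2 * T₁ z + k * D * z)
          (-k * (T₁ x - T₂ x) + k * D) (Ici x) x := h1.add h2
      rw [hd] at h3
      simpa using h3)
    intro z hz
    have := hconst z hz
    simp only [mul_zero, add_zero] at this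
    rw [← hbc₁]
    linarith
  -- Step 3: T₂ is linear
  have hstep3 : ∀ z ∈ Icc (0:ℝ) 1, T₂ z = T₂ 0 - (2/7) * k * D * z := by
    have hGcont : ContinuousOn (fun z => (7/2) * T₂ z + k * D * z) (Icc 0 1) :=
      (hT₂diff.continuousOn.const_smul (7/2:ℝ)).add (continuousOn_id.const_smul (k*D))
    have hconst := constant_of_has_deriv_right_zero hGcont (fun x hx => by
      have h1 := (hode₂ x (Ico_subset_Icc_self hx)).mono_of_mem_nhdsWithin (hmem x hx)
      have h2 : HasDerivWithinAt (fun z : ℝ => k * D * z) (k * D) (Ici x) x := by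
        simpa using (hasDerivWithinAt_id x (Ici x)).const_mul (k * D)
      have hd : T₁ x - T₂ x = D := hstep1 x (Ico_subset_Icc_self hx)
      have h3 : HasDerivWithinAt (fun z => 7/2 * T₂ z + k * D * z)
          (-k * (T₁ x - T₂ x) + k * D) (Ici x) x := h1.add h2
      rw [hd] at h3
      simpa using h3)
    intro z hz
    have := hconst z hz
    simp only [mul_zero, add_zero] at this
    linarith
  -- identify D with T_D
  have hT20 : T₂ 0 = 1 + (2/7) * k * D := by
    have := hstep3 1 h1mem
    rw [hbc₂] at this
    linarith
  have hDval : D = T_D := by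
    have hden : (0:ℝ) < 1 + (2/7) * k := by linarith
    have hDeq : D * (1 + (2/7) * k) = T_int - 1 := by
      have : D = T₁ 0 - T₂ 0 := hD
      rw [hbc₁, hT20] at this
      ring_nf
      ring_nf at this
      linarith
    rw [hTD, eq_div_iff (ne_of_gt hden)]
    linarith [hDeq]
  intro z hz
  refine ⟨by rw [← hDval]; exact hstep1 z hz, ?_, ?_⟩
  · rw [← hDval]; exact hstep2 z hz
  · rw [← hDval]
    have := hstep3 z hz
    rw [hT20] at this
    rw [this]; ring
end

section
/- Let σ⁰ > 0, Φ⁰ > 0, and T_int > 1 be real constants; set T_D := (T_int − 1)/(1 + (2/7)(σ⁰/Φ⁰)) and a := (2/7)(σ⁰/Φ⁰)T_D, and assume a < T_int. Define T₁⁰(z) := T_int − a·z and T₂⁰(z) := 1 − a·(z − 1) on [0,1]. Suppose there exist a real number p_int and differentiable functions p₁, p₂ : [0,1] → ℝ satisfying, for i = 1, 2 and all z ∈ [0,1], p_i'(z) = −(Φ⁰)²·(T_i⁰)'(z) − 1/T_i⁰(z), with boundary values p₁(1) = 0, p₁(0) = p_int − (T_int/2)(Φ⁰)², p₂(0) = p_int,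 and p₂(1) = −(1/2)(Φ⁰)². Then Φ⁰ satisfies the transcendental equation (Φ⁰)²·(T_int + 1)/2 = (7Φ⁰/(2σ⁰T_D))·log[(1 + (2/7)(σ⁰/Φ⁰)T_D)·(1 − (2/7)(σ⁰/Φ⁰)T_D/T_int)]. -/
open Set

lemma diff_const_on_Icc {p F : ℝ → ℝ} (hp : DifferentiableOn ℝ p (Icc 0 1))
    (h : ∀ z ∈ Icc (0:ℝ) 1, HasDerivWithinAt (fun z => p z - F z) 0 (Icc 0 1) z) :
    p 1 - F 1 = p 0 - F 0 := by
  have hd : DifferentiableOn ℝ (fun z => p z - F z) (Icc 0 1) :=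
    fun z hz => (h z hz).differentiableWithinAt
  have := constant_of_derivWithin_zero hd (fun z hz => ?_) 1 (by norm_num : (1:ℝ) ∈ Icc 0 1)
  · simpa using this
  · exact (h z (Ico_subset_Icc_self hz)).derivWithin
      ((uniqueDiffOn_Icc one_pos) z (Ico_subset_Icc_self hz))

/-- The transcendental equation determining the leading-order dimensionless mass flux
`Φ₀` in the asymptotic expansion of the heat exchanger model. -/
theorem leading_order_mass_flux_equation
    (σ₀ Φ₀ T_int : ℝ) (hσ : 0 < σ₀) (hΦ : 0 < Φ₀) (hT : 1 < T_int)
    (T_D : ℝ) (hTD : T_D = (T_int - 1) / (1 + (2/7) * (σ₀ / Φ₀)))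
    (a : ℝ) (ha : a = (2/7) * (σ₀ / Φ₀) * T_D) (haT : a < T_int)
    (T₁₀ T₂₀ : ℝ → ℝ)
    (hT₁₀ : T₁₀ = fun z => T_int - a * z)
    (hT₂₀ : T₂₀ = fun z => 1 - a * (z - 1))
    (p_int : ℝ) (p₁ p₂ : ℝ → ℝ)
    (hp₁diff : DifferentiableOn ℝ p₁ (Icc 0 1)) (hp₂diff : DifferentiableOn ℝ p₂ (Icc 0 1))
    (hode₁ : ∀ z ∈ Icc (0:ℝ) 1,
      HasDerivWithinAt p₁ (-(Φ₀)^2 * deriv T₁₀ z - 1 / T₁₀ z) (Icc 0 1) z)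
    (hode₂ : ∀ z ∈ Icc (0:ℝ) 1,
      HasDerivWithinAt p₂ (-(Φ₀)^2 * deriv T₂₀ z - 1 / T₂₀ z) (Icc 0 1) z)
    (hbc₁H : p₁ 1 = 0)
    (hbc₁0 : p₁ 0 = p_int - (T_int / 2) * (Φ₀)^2)
    (hbc₂0 : p₂ 0 = p_int)
    (hbc₂H : p₂ 1 = -(1/2) * (Φ₀)^2) :
    (Φ₀)^2 * (T_int + 1) / 2 =
      (7 * Φ₀ / (2 * σ₀ * T_D)) *
        Real.log ((1 + (2/7) * (σ₀ / Φ₀) * T_D) * (1 - (2/7) * (σ₀ / Φ₀) * T_D / T_int)) := by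
  have hTD0 : 0 < T_D := by
    rw [hTD]
    apply div_pos (by linarith)
    positivity
  have ha0 : 0 < a := by
    rw [ha]; positivity
  have haz₁ : ∀ z ∈ Icc (0:ℝ) 1, 0 < T_int - a * z := by
    intro z hz
    nlinarith [hz.1, hz.2]
  have haz₂ : ∀ z ∈ Icc (0:ℝ) 1, 0 < 1 - a * (z - 1) := by
    intro z hz
    nlinarith [hz.1, hz.2]
  -- derivatives of T
  have hdT₁ : ∀ z : ℝ, deriv T₁₀ z = -a := by
    intro z; rw [hT₁₀]
    have : HasDerivAt (fun z : ℝ => T_int - a * z) (-a) z := by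
      simpa using ((hasDerivAt_id z).const_mul a).const_sub T_int
    exact this.deriv
  have hdT₂ : ∀ z : ℝ, deriv T₂₀ z = -a := by
    intro z; rw [hT₂₀]
    have : HasDerivAt (fun z : ℝ => 1 - a * (z - 1)) (-a) z := by
      simpa using ((hasDerivAt_id z).sub_const 1 |>.const_mul a).const_sub 1
    exact this.deriv
  -- antiderivatives
  set F₁ : ℝ → ℝ := fun z => Φ₀^2 * (a * z) + (1/a) * Real.log (T_int - a * z) with hF₁
  set F₂ : ℝ → ℝ := fun z => Φ₀^2 * (a * z) + (1/a) * Real.log (1 - a * (z - 1)) with hF₂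
  have hF₁d : ∀ z ∈ Icc (0:ℝ) 1,
      HasDerivAt F₁ (Φ₀^2 * a - 1 / (T_int - a * z)) z := by
    intro z hz
    have hinner : HasDerivAt (fun z : ℝ => T_int - a * z) (-a) z := by
      simpa using ((hasDerivAt_id z).const_mul a).const_sub T_int
    have hlog : HasDerivAt (fun z : ℝ => Real.log (T_int - a * z)) (-a / (T_int - a * z)) z := by
      have := (Real.hasDerivAt_log (haz₁ z hz).ne').comp z hinner
      simpa [Function.comp_def, div_eq_inv_mul] using this
    have hlin : HasDerivAt (fun z : ℝ => Φ₀^2 * (a * z)) (Φ₀^2 * a) z := by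
      simpa using ((hasDerivAt_id z).const_mul a).const_mul (Φ₀^2)
    have := hlin.add (hlog.const_mul (1/a))
    convert this using 1
    · rfl
    · rfl
    · rfl
    field_simp
    ring
  have hF₂d : ∀ z ∈ Icc (0:ℝ) 1,
      HasDerivAt F₂ (Φ₀^2 * a - 1 / (1 - a * (z - 1))) z := by
    intro z hz
    have hinner : HasDerivAt (fun z : ℝ => 1 - a * (z - 1)) (-a) z := by
      simpa using ((hasDerivAt_id z).sub_const 1 |>.const_mul a).const_sub 1
    have hlog : HasDerivAt (fun z : ℝ => Real.log (1 - a * (z - 1)))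
        (-a / (1 - a * (z - 1))) z := by
      have := (Real.hasDerivAt_log (haz₂ z hz).ne').comp z hinner
      simpa [Function.comp_def, div_eq_inv_mul] using this
    have hlin : HasDerivAt (fun z : ℝ => Φ₀^2 * (a * z)) (Φ₀^2 * a) z := by
      simpa using ((hasDerivAt_id z).const_mul a).const_mul (Φ₀^2)
    have := hlin.add (hlog.const_mul (1/a))
    convert this using 1
    · rfl
    · rfl
    · rfl
    field_simp
    ring
  have key₁ : p₁ 1 - F₁ 1 = p₁ 0 - F₁ 0 := by
    apply diff_const_on_Icc hp₁diff
    intro z hz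
    have := (hode₁ z hz).sub ((hF₁d z hz).hasDerivWithinAt)
    convert this using 1
    · rfl
    · rfl
    · rfl
    rw [hdT₁ z, hT₁₀]
    ring
  have key₂ : p₂ 1 - F₂ 1 = p₂ 0 - F₂ 0 := by
    apply diff_const_on_Icc hp₂diff
    intro z hz
    have := (hode₂ z hz).sub ((hF₂d z hz).hasDerivWithinAt)
    convert this using 1
    · rfl
    · rfl
    · rfl
    rw [hdT₂ z, hT₂₀]
    ring
  -- unfold F values
  have hTa : (0:ℝ) < T_int - a := by linarith
  have h1a : (0:ℝ) < 1 + a := by linarith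
  rw [hbc₁H, hbc₁0] at key₁
  rw [hbc₂H, hbc₂0] at key₂
  simp only [hF₁, hF₂] at key₁ key₂
  norm_num at key₁ key₂
  -- key₁ : -(Φ₀^2*a + a⁻¹ * log (T_int - a)) = p_int - T_int/2*Φ₀^2 - a⁻¹ * log T_int (roughly)
  -- combine
  have hlog_sum : Real.log ((1 + a) * ((T_int - a) / T_int))
      = Real.log (1 + a) + Real.log (T_int - a) - Real.log T_int := by
    rw [Real.log_mul h1a.ne' (div_pos hTa (by linarith)).ne',
      Real.log_div hTa.ne' (by linarith : T_int ≠ 0).symm.symm]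
    ring
  have hcoef : 7 * Φ₀ / (2 * σ₀ * T_D) = 1 / a := by
    rw [ha]; field_simp
  have harg : (1 + (2/7) * (σ₀ / Φ₀) * T_D) * (1 - (2/7) * (σ₀ / Φ₀) * T_D / T_int)
      = (1 + a) * ((T_int - a) / T_int) := by
    rw [← ha]
    congr 1
    field_simp
  rw [hcoef, harg, hlog_sum, one_div]
  have hkey : a⁻¹ * (Real.log (1 + a) + Real.log (T_int - a) - Real.log T_int)
      = Φ₀^2 * (T_int + 1) / 2 := by linarith
  linarith [hkey]
end
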